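/- arXiv:2008.02299 — 3 statements merged into one kernel-verified Lean document; each statement's English description precedes it below -/
import Mathlib

section
/- Let n ≥ 1 and let 0 = x₀ < x₁ < ⋯ < x_n = 1 be real numbers. Suppose that for every pair of indices 0 ≤ i, j ≤ n−1 we are given an affine function g_{i,j} : ℝ → ℝ (i.e. of the form g_{i,j}(x) = c·x + d) such that: (a) the cocycle condition g_{i,j} + g_{j,k} = g_{i,k} holds for all 0 ≤ i, j, k ≤ n−1; (b) whenever i ≤ j, one has g_{i,j}(x) ≤ 0 for all x ∈ [x_i, x_{i+1}] and g_{i,j}(x) ≥ 0 for all x ∈ [x_j, x_{j+1}]. If g_{0,n−1} is identically zero, then g_{0,i} is identically zero for every 0 ≤ i ≤ n−1. -/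
/-! `g 0 i` is nonpositive at both ends `x 0`, `x n` of the whole interval: at `x 0` by (b) on the
first subinterval, at `x n` because the cocycle condition and `g 0 (n-1) ≡ 0` give
`g 0 i = -g i (n-1)`, which is nonpositive on the last subinterval. Being affine, `g 0 i` is then
nonpositive on `[x 0, x n]`; but it is nonnegative on the nondegenerate subinterval `[x i, x (i+1)]`,
so it has two distinct zeros and vanishes identically. -/

lemma affine_nonpos_of_mem_Icc {c d a b t : ℝ} (ha : c * a + d ≤ 0) (hb : c * b + d ≤ 0)
    (ht : t ∈ Set.Icc a b) : c * t + d ≤ 0 := by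
  obtain ⟨hat, htb⟩ := ht
  rcases le_total c 0 with hc | hc
  · nlinarith
  · nlinarith

lemma affine_eq_zero_of_eq_zero_of_eq_zero {c d p q : ℝ} (hpq : p ≠ q)
    (hp : c * p + d = 0) (hq : c * q + d = 0) (t : ℝ) : c * t + d = 0 := by
  have hc : c = 0 := by
    have : c * (q - p) = 0 := by linear_combination hq - hp
    exact (mul_eq_zero.mp this).resolve_right (sub_ne_zero.mpr hpq.symm)
  subst hc
  linarith

lemma affine_eq_zero_of_nonpos_of_nonneg {c d a b p q : ℝ}
    (ha : c * a + d ≤ 0) (hb : c * b + d ≤ 0) (hap : a ≤ p) (hpq : p < q) (hqb : q ≤ b)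
    (hp : 0 ≤ c * p + d) (hq : 0 ≤ c * q + d) (t : ℝ) : c * t + d = 0 :=
  affine_eq_zero_of_eq_zero_of_eq_zero hpq.ne
    (le_antisymm (affine_nonpos_of_mem_Icc ha hb ⟨hap, hpq.le.trans hqb⟩) hp)
    (le_antisymm (affine_nonpos_of_mem_Icc ha hb ⟨hap.trans hpq.le, hqb⟩) hq) t

theorem stmt_0_general (n : ℕ) (hn : 1 ≤ n) (x : ℕ → ℝ)
    (hxlt : ∀ i < n, x i < x (i + 1))
    (g : ℕ → ℕ → ℝ → ℝ)
    (haff : ∀ i < n, ∀ j < n, ∃ c d : ℝ, ∀ t : ℝ, g i j t = c * t + d)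
    (hcoc : ∀ i < n, ∀ j < n, ∀ k < n, ∀ t : ℝ, g i j t + g j k t = g i k t)
    (hneg : ∀ i j, i < n → j < n → i ≤ j →
      ∀ t ∈ Set.Icc (x i) (x (i + 1)), g i j t ≤ 0)
    (hpos : ∀ i j, i < n → j < n → i ≤ j →
      ∀ t ∈ Set.Icc (x j) (x (j + 1)), 0 ≤ g i j t)
    (hzero : ∀ t : ℝ, g 0 (n - 1) t = 0) :
    ∀ i < n, ∀ t : ℝ, g 0 i t = 0 := by
  intro i hi
  have hlast : n - 1 < n := by omega
  have hsucc : n - 1 + 1 = n := by omega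
  have hmono : MonotoneOn x (Set.Iic n) :=
    monotoneOn_of_le_add_one Set.ordConnected_Iic fun a _ _ ha1 => (hxlt a ha1).le
  have h_first : g 0 i (x 0) ≤ 0 := hneg 0 i hn hi i.zero_le _ ⟨le_rfl, (hxlt 0 hn).le⟩
  have h_last : g 0 i (x n) ≤ 0 := by
    have hcocycle := hcoc 0 hn i hi (n - 1) hlast (x n)
    have h_tail := hpos i (n - 1) hi hlast (by omega) (x n)
      ⟨hsucc ▸ (hxlt (n - 1) hlast).le, hsucc ▸ le_rfl⟩
    linarith [hzero (x n)]
  have h_left : 0 ≤ g 0 i (x i) := hpos 0 i hn hi i.zero_le _ ⟨le_rfl, (hxlt i hi).le⟩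
  have h_right : 0 ≤ g 0 i (x (i + 1)) := hpos 0 i hn hi i.zero_le _ ⟨(hxlt i hi).le, le_rfl⟩
  obtain ⟨c, d, hcd⟩ := haff 0 hn i hi
  simp only [hcd] at h_first h_last h_left h_right ⊢
  exact affine_eq_zero_of_nonpos_of_nonneg h_first h_last
    (hmono (Set.mem_Iic.mpr n.zero_le) (Set.mem_Iic.mpr hi.le) i.zero_le) (hxlt i hi)
    (hmono (Set.mem_Iic.mpr hi) (Set.mem_Iic.mpr le_rfl) hi) h_left h_right

/-- Combinatorial core of Theorem 2.12: a cocycle of affine functions on `[0,1]`,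
nonpositive on the `i`-th subinterval and nonnegative on the `j`-th for `i ≤ j`,
with `g 0 (n-1)` identically zero, forces all `g 0 i` to vanish identically. -/
theorem stmt_0 (n : ℕ) (hn : 1 ≤ n) (x : ℕ → ℝ)
    (hx0 : x 0 = 0) (hxn : x n = 1)
    (hxlt : ∀ i < n, x i < x (i + 1))
    (g : ℕ → ℕ → ℝ → ℝ)
    (haff : ∀ i < n, ∀ j < n, ∃ c d : ℝ, ∀ t : ℝ, g i j t = c * t + d)
    (hcoc : ∀ i < n, ∀ j < n, ∀ k < n, ∀ t : ℝ, g i j t + g j k t = g i k t)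
    (hneg : ∀ i j, i < n → j < n → i ≤ j →
      ∀ t ∈ Set.Icc (x i) (x (i + 1)), g i j t ≤ 0)
    (hpos : ∀ i j, i < n → j < n → i ≤ j →
      ∀ t ∈ Set.Icc (x j) (x (j + 1)), 0 ≤ g i j t)
    (hzero : ∀ t : ℝ, g 0 (n - 1) t = 0) :
    ∀ i < n, ∀ t : ℝ, g 0 i t = 0 :=
  stmt_0_general n hn x hxlt g haff hcoc hneg hpos hzero
end

section
/- Let T be a finite tree (a finite connected acyclic simple graph) with vertex set V, let B ⊆ V and fix a vertex r ∈ B. Let F : V → ℝ be a function such that: (i) for every v ∈ V \ B, F is superharmonic at v, i.e. ∑_{w ∈ N(v)} (F(w) − F(v)) ≤ 0; and (ii) for every v ∈ B with v ≠ r and every neighbor w ∈ N(v), one has F(w) ≤ F(v). Then F is non-decreasing along every simple path starting at r: if r = v₀, v₁, …, v_k are pairwise distinct vertices with v_j adjacent to v_{j+1} for each 0 ≤ j < k, then F(v₀) ≤ F(v₁) ≤ ⋯ ≤ F(v_k). In particular, F attains its minimum over V at r. -/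
/-!
Root the tree at `r`. Every vertex `b ≠ r` has exactly one neighbour closer to `r`, its parent, and
all its other neighbours are farther. Arguing from the leaves towards the root, `F` does not
decrease along any edge pointing away from `r`: at `b ∈ B` this is hypothesis (ii), and at `b ∉ B`
superharmonicity bounds `F(parent) - F(b)` by minus a sum of terms `F(w) - F(b) ≥ 0` over the
children `w`. A simple path from `r` only traverses edges pointing away from `r`.
-/

namespace SimpleGraph

variable {V : Type*} {G : SimpleGraph V}

lemma Connected.dist_lt_card [Fintype V] (hG : G.Connected) (u v : V) :
    G.dist u v < Fintype.card V := by
  obtain ⟨p, hp, hlen⟩ := hG.exists_path_of_dist u v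
  exact hlen ▸ hp.length_lt

lemma IsTree.length_eq_dist_of_isPath (hT : G.IsTree) {u v : V} {p : G.Walk u v}
    (hp : p.IsPath) : p.length = G.dist u v := by
  obtain ⟨q, hq, hlen⟩ := hT.connected.exists_path_of_dist u v
  rw [(hT.existsUnique_path u v).unique hp hq, hlen]

lemma IsTree.eq_penultimate_of_adj_of_dist_lt (hT : G.IsTree) {r a b : V} {p : G.Walk r b}
    (hp : p.IsPath) (hab : G.Adj a b) (hlt : G.dist r a < G.dist r b) : a = p.penultimate := by
  classical
  obtain ⟨q, hq, hlen⟩ := hT.connected.exists_path_of_dist r a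
  have ha : a ∈ p.support := by
    by_contra ha
    have hb := hT.isAcyclic.mem_support_of_ne_mem_support_of_adj_of_isPath hq hp hab ha
    have := (dist_le (q.takeUntil b hb)).trans (q.length_takeUntil_le_length hb)
    omega
  exact hT.isAcyclic.eq_penultimate_of_adj_end hp hab.symm ha

lemma IsTree.eq_of_adj_of_dist_add_one_eq (hT : G.IsTree) {r a a' b : V}
    (ha : G.Adj a b) (ha' : G.Adj a' b)
    (hd : G.dist r a + 1 = G.dist r b) (hd' : G.dist r a' + 1 = G.dist r b) : a = a' := by
  obtain ⟨p, hp, -⟩ := hT.connected.exists_path_of_dist r b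
  rw [hT.eq_penultimate_of_adj_of_dist_lt hp ha (by omega),
    hT.eq_penultimate_of_adj_of_dist_lt hp ha' (by omega)]

lemma IsTree.isChain_dist_support (hT : G.IsTree) {r u : V} {p : G.Walk r u} (hp : p.IsPath) :
    p.support.IsChain (fun a b => G.Adj a b ∧ G.dist r a + 1 = G.dist r b) := by
  induction p using Walk.concatRec with
  | Hnil => exact List.isChain_singleton _
  | @Hconcat _ v w q hvw ih =>
    have hq : q.IsPath := ((Walk.concat_isPath_iff hvw).1 hp).1
    rw [Walk.support_concat]
    refine (ih hq).append (List.isChain_singleton _) ?_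
    intro x hx y hy
    rw [List.getLast?_eq_some_getLast (by simp), Walk.getLast_support, Option.mem_some_iff] at hx
    rw [List.head?_cons, Option.mem_some_iff] at hy
    subst hx hy
    refine ⟨hvw, ?_⟩
    rw [← hT.length_eq_dist_of_isPath hq, ← hT.length_eq_dist_of_isPath hp, Walk.length_concat]

section Superharmonic

variable [Fintype V] [DecidableRel G.Adj] {B : Set V} {r : V} {F : V → ℝ}

theorem IsTree.le_of_adj_of_dist_add_one_eq (hT : G.IsTree)
    (hsup : ∀ v ∉ B, ∑ w ∈ G.neighborFinset v, (F w - F v) ≤ 0)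
    (hB : ∀ v ∈ B, v ≠ r → ∀ w ∈ G.neighborFinset v, F w ≤ F v)
    {a b : V} (hab : G.Adj a b) (hd : G.dist r a + 1 = G.dist r b) : F a ≤ F b := by
  classical
  have ha : a ∈ G.neighborFinset b := (G.mem_neighborFinset b a).2 hab.symm
  by_cases hbB : b ∈ B
  · have hbr : b ≠ r := by rintro rfl; simp at hd
    exact hB b hbB hbr a ha
  · have hchildren : ∀ w ∈ (G.neighborFinset b).erase a, F b ≤ F w := by
      intro w hw
      obtain ⟨hwa, hbw⟩ := Finset.mem_erase.1 hw
      rw [mem_neighborFinset] at hbw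
      have hdw : G.dist r b + 1 = G.dist r w := by
        rcases hT.dist_eq_dist_add_one_of_adj r hbw with h | h
        · exact absurd (hT.eq_of_adj_of_dist_add_one_eq hbw.symm hab h.symm hd) hwa
        · exact h.symm
      exact hT.le_of_adj_of_dist_add_one_eq hsup hB hbw hdw
    have hharm := hsup b hbB
    rw [← Finset.add_sum_erase _ _ ha] at hharm
    have := Finset.sum_nonneg fun w hw => sub_nonneg.2 (hchildren w hw)
    linarith
termination_by Fintype.card V - G.dist r b
decreasing_by have := hT.connected.dist_lt_card r w; omega

end Superharmonic

end SimpleGraph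

theorem stmt_3_general {V : Type*} [Fintype V]
    (G : SimpleGraph V) [DecidableRel G.Adj] (hT : G.IsTree)
    (B : Set V) (r : V) (F : V → ℝ)
    (hsup : ∀ v ∉ B, ∑ w ∈ G.neighborFinset v, (F w - F v) ≤ 0)
    (hB : ∀ v ∈ B, v ≠ r → ∀ w ∈ G.neighborFinset v, F w ≤ F v) :
    (∀ (u : V) (p : G.Walk r u), p.IsPath →
      List.Chain' (fun a b => F a ≤ F b) p.support) ∧
    (∀ u : V, F r ≤ F u) := by
  have hmono : ∀ (u : V) (p : G.Walk r u), p.IsPath →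
      p.support.IsChain (fun a b => F a ≤ F b) := fun _ _ hp =>
    (hT.isChain_dist_support hp).imp fun _ _ ⟨hab, hd⟩ =>
      hT.le_of_adj_of_dist_add_one_eq hsup hB hab hd
  refine ⟨hmono, fun u => ?_⟩
  obtain ⟨p, hp⟩ := (hT.connected r u).exists_isPath
  have hr_le := (hmono u p hp).pairwise
  rw [← p.cons_tail_support, List.pairwise_cons] at hr_le
  rcases eq_or_ne r u with rfl | hru
  · exact le_rfl
  · exact hr_le.1 u (p.end_mem_tail_support_of_ne hru)

/-- Discrete analogue of Lemma 6.4: on a finite tree, a function superharmonic off `B`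
whose values do not increase towards the vertices of `B ∖ {r}` is non-decreasing along
every simple path from `r`, and attains its minimum at `r`. -/
theorem stmt_3 {V : Type*} [Fintype V]
    (G : SimpleGraph V) [DecidableRel G.Adj] (hT : G.IsTree)
    (B : Set V) (r : V) (hr : r ∈ B) (F : V → ℝ)
    (hsup : ∀ v ∉ B, ∑ w ∈ G.neighborFinset v, (F w - F v) ≤ 0)
    (hB : ∀ v ∈ B, v ≠ r → ∀ w ∈ G.neighborFinset v, F w ≤ F v) :
    (∀ (u : V) (p : G.Walk r u), p.IsPath →
      List.Chain' (fun a b => F a ≤ F b) p.support) ∧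
    (∀ u : V, F r ≤ F u) :=
  stmt_3_general G hT B r F hsup hB
end

section
/- Let n ≥ 7 be an integer, let V be a real vector space, and let B be a symmetric bilinear form on V satisfying the Hodge-index property: for every a ∈ V with B(a,a) > 0 and every nonzero b ∈ V with B(a,b) = 0, one has B(b,b) < 0. Then there do not exist vectors D₁, …, D_n ∈ V such that B(D_i, D_i) = −1 for all i, B(D_i, D_j) = 1 whenever i − j ≡ ±1 (mod n), and B(D_i, D_j) = 0 for all other pairs i ≠ j. -/
/-!
With `a = D₀ + D₁ + D₂` and `b = D₄ + D₅` one gets `B(a,a) = 1`, `B(a,b) = 0` and `B(b,b) = 0`,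
since for `n ≥ 7` none of `D₀, D₁, D₂` meets `D₄` or `D₅`. The Hodge-index property then forces
`b = 0`, contradicting `B(b, D₃) = 1`.
-/

theorem LinearMap.BilinForm.eq_zero_of_isotropic_of_orthogonal {V : Type*} [AddCommGroup V]
    [Module ℝ V] {B : LinearMap.BilinForm ℝ V}
    (hodge : ∀ a : V, 0 < B a a → ∀ b : V, b ≠ 0 → B a b = 0 → B b b < 0) {a b : V}
    (ha : 0 < B a a) (hab : B a b = 0) (hb : B b b = 0) : b = 0 := by
  by_contra hb0
  exact (hodge a ha b hb0 hab).ne hb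

section CycleConfiguration

variable {n : ℕ} {V : Type*} [AddCommGroup V] [Module ℝ V] {B : LinearMap.BilinForm ℝ V}
  {D : Fin n → V}

-- Away from the wrap-around, a cycle configuration looks like a path.
theorem apply_castLE_eq_path_of_cycle {m : ℕ} (hmn : m < n)
    (hdiag : ∀ i : Fin n, B (D i) (D i) = -1)
    (hadj : ∀ i j : Fin n, ((i.val + 1) % n = j.val ∨ (j.val + 1) % n = i.val) →
      B (D i) (D j) = 1)
    (hoff : ∀ i j : Fin n, i ≠ j → ¬((i.val + 1) % n = j.val ∨ (j.val + 1) % n = i.val) →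
      B (D i) (D j) = 0)
    (i j : Fin m) :
    B (D (Fin.castLE hmn.le i)) (D (Fin.castLE hmn.le j)) =
      if i = j then -1 else if i.val + 1 = j.val ∨ j.val + 1 = i.val then 1 else 0 := by
  have hi : (i.val + 1) % n = i.val + 1 := Nat.mod_eq_of_lt (by omega)
  have hj : (j.val + 1) % n = j.val + 1 := Nat.mod_eq_of_lt (by omega)
  split_ifs with hij hij'
  · subst hij
    exact hdiag _
  · exact hadj _ _ (by simpa [hi, hj] using hij')
  · exact hoff _ _ (by simpa [Fin.ext_iff] using hij) (by simpa [hi, hj] using hij')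

end CycleConfiguration

theorem stmt_7_general (n : ℕ) (hn : 7 ≤ n) {V : Type*} [AddCommGroup V] [Module ℝ V]
    (B : LinearMap.BilinForm ℝ V)
    (hodge : ∀ a : V, 0 < B a a → ∀ b : V, b ≠ 0 → B a b = 0 → B b b < 0) :
    ¬ ∃ D : Fin n → V,
      (∀ i : Fin n, B (D i) (D i) = -1) ∧
      (∀ i j : Fin n, ((i.val + 1) % n = j.val ∨ (j.val + 1) % n = i.val) →
        B (D i) (D j) = 1) ∧
      (∀ i j : Fin n, i ≠ j →
        ¬((i.val + 1) % n = j.val ∨ (j.val + 1) % n = i.val) →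
        B (D i) (D j) = 0) := by
  rintro ⟨D, hdiag, hadj, hoff⟩
  have h6 : 6 < n := by omega
  set E : Fin 6 → V := fun i => D (Fin.castLE h6.le i)
  have hE : ∀ i j, B (E i) (E j) =
      if i = j then -1 else if i.val + 1 = j.val ∨ j.val + 1 = i.val then 1 else 0 :=
    apply_castLE_eq_path_of_cycle h6 hdiag hadj hoff
  set a := E 0 + E 1 + E 2
  set b := E 4 + E 5
  have haa : B a a = 1 := by simp [a, hE]
  have hab : B a b = 0 := by simp [a, b, hE]
  have hbb : B b b = 0 := by simp [b, hE]
  have hb3 : B b (E 3) = 1 := by simp [b, hE]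
  have hb : b = 0 := B.eq_zero_of_isotropic_of_orthogonal hodge (by norm_num [haa]) hab hbb
  simp [hb] at hb3

/-- First step of Proposition 8.4: a symmetric bilinear form with the Hodge-index
property admits no anticanonical-cycle configuration `D₁, …, D_n` with `n ≥ 7`:
`B(Dᵢ,Dᵢ) = -1`, `B(Dᵢ,Dⱼ) = 1` for cyclically adjacent indices, `0` otherwise. -/
theorem stmt_7 (n : ℕ) (hn : 7 ≤ n) {V : Type*} [AddCommGroup V] [Module ℝ V]
    (B : LinearMap.BilinForm ℝ V) (hsymm : ∀ a b : V, B a b = B b a)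
    (hodge : ∀ a : V, 0 < B a a → ∀ b : V, b ≠ 0 → B a b = 0 → B b b < 0) :
    ¬ ∃ D : Fin n → V,
      (∀ i : Fin n, B (D i) (D i) = -1) ∧
      (∀ i j : Fin n, ((i.val + 1) % n = j.val ∨ (j.val + 1) % n = i.val) →
        B (D i) (D j) = 1) ∧
      (∀ i j : Fin n, i ≠ j →
        ¬((i.val + 1) % n = j.val ∨ (j.val + 1) % n = i.val) →
        B (D i) (D j) = 0) :=
  stmt_7_general n hn B hodge
end
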